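/- arXiv:2504.05405 — 2 statements merged into one kernel-verified Lean document; each statement's English description precedes it below -/
import Mathlib

section
/- Block MDPs have coverability bounded by the number of latent states: Let M be a Block MDP with horizon H, latent layers S_1, …, S_H, and emission distributions ψ(s) with pairwise disjoint supports within each layer. Then for every layer h, the distribution μ_h := (1/|S_h|)·Σ_{s∈S_h} ψ(s) on X_h satisfies d^π_h(x) ≤ |S_h|·μ_h(x) for every policy π and every observation x ∈ X_h. Consequently, for every policy class Π, the coverability coefficient satisfies C_cov(Π, M) ≤ max_{h∈[H]} |S_h|. -/
open Finset

/-- A Block MDP with horizon `H`: finite latent layers with an initial latent state,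
latent layer-respecting transitions and rewards in `[0,1]`, and emission distributions
with pairwise disjoint supports within each layer (decodability), recorded via the
ground-truth decoder `dec`. -/
structure BlockMDP (S X A : Type) [Fintype S] [Fintype X] [Fintype A] (H : ℕ) where
  slayer : S → ℕ
  slayer_lb : ∀ s, 1 ≤ slayer s
  slayer_ub : ∀ s, slayer s ≤ H
  slayer_surj : ∀ h, 1 ≤ h → h ≤ H → ∃ s, slayer s = h
  s1 : S
  s1_layer : slayer s1 = 1
  Plat : S → A → S → ℝ
  Plat_nonneg : ∀ s a s', 0 ≤ Plat s a s'
  Plat_sum_one : ∀ s a, slayer s < H → ∑ s', Plat s a s' = 1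
  Plat_supp : ∀ s a s', slayer s < H → Plat s a s' ≠ 0 → slayer s' = slayer s + 1
  Rlat : S → A → ℝ
  Rlat_nonneg : ∀ s a, 0 ≤ Rlat s a
  Rlat_le_one : ∀ s a, Rlat s a ≤ 1
  emit : S → X → ℝ
  emit_nonneg : ∀ s x, 0 ≤ emit s x
  emit_sum_one : ∀ s, ∑ x, emit s x = 1
  dec : X → S
  dec_spec : ∀ s x, emit s x ≠ 0 → dec x = s

namespace BlockMDP

variable {S X A : Type} [Fintype S] [Fintype X] [Fintype A] {H : ℕ}

/-- Layer of an observation (the layer of its latent state). -/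
def xlayer (M : BlockMDP S X A H) (x : X) : ℕ := M.slayer (M.dec x)

/-- Induced observation-level transition kernel
`P(x'|x,a) = Σ_{s'} P_lat(s'|φ(x),a)·ψ(s')(x')`. -/
noncomputable def Pobs (M : BlockMDP S X A H) (x : X) (a : A) (x' : X) : ℝ :=
  ∑ s', M.Plat (M.dec x) a s' * M.emit s' x'

/-- Induced observation-level reward `R(x,a) = R_lat(φ(x),a)`. -/
def Robs (M : BlockMDP S X A H) (x : X) (a : A) : ℝ := M.Rlat (M.dec x) a

/-- `n`-step value function of policy `π` in the induced observation-level MDP. -/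
noncomputable def Vsteps (M : BlockMDP S X A H) (π : X → A) : ℕ → X → ℝ
  | 0, _ => 0
  | n + 1, x => M.Robs x (π x) + ∑ x', M.Pobs x (π x) x' * Vsteps M π n x'

/-- `Q^{π_{h+1:H}}(x,a)`: expected cumulative reward of taking action `a` at
`x ∈ X_h` and then following `π` (which is only consulted at layers `> h`). -/
noncomputable def Q (M : BlockMDP S X A H) (π : X → A) (x : X) (a : A) : ℝ :=
  M.Robs x a + ∑ x', M.Pobs x a x' * Vsteps M π (H - M.xlayer x) x'

noncomputable def occAux (M : BlockMDP S X A H) (π : X → A) : ℕ → X → ℝ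
  | 0 => fun x => M.emit M.s1 x
  | n + 1 => fun x' => ∑ x, occAux M π n x * M.Pobs x (π x) x'

/-- Occupancy measure `d^π_h` over observations at layer `h ∈ {1, …, H}`. -/
noncomputable def occ (M : BlockMDP S X A H) (π : X → A) (h : ℕ) : X → ℝ :=
  occAux M π (h - 1)

/-- Layer-`h` coverability index of the class `Π`:
`inf_{μ_h ∈ Δ(X_h)} sup_{π ∈ Π} max_{x : d^π_h(x)>0} d^π_h(x)/μ_h(x)`, expressed as
the infimum of the constants `c` for which some distribution `μ_h` on `X_h` satisfies
`d^π_h(x) ≤ c·μ_h(x)` for all `π ∈ Π` and `x ∈ X_h`. -/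
noncomputable def covAt (M : BlockMDP S X A H) (Pi : Finset (X → A)) (h : ℕ) : ℝ :=
  sInf {c : ℝ | ∃ μh : X → ℝ, (∀ x, 0 ≤ μh x) ∧ (∑ x, μh x = 1) ∧
    (∀ x, μh x ≠ 0 → M.xlayer x = h) ∧
    ∀ π ∈ Pi, ∀ x, M.xlayer x = h → M.occ π h x ≤ c * μh x}

/-- Coverability coefficient `C_cov(Π, M) = max_{h ∈ [H]} covAt h`. -/
noncomputable def Ccov (M : BlockMDP S X A H) (Pi : Finset (X → A)) : ℝ :=
  ⨆ h ∈ Finset.Icc 1 H, M.covAt Pi h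

end BlockMDP


namespace BlockMDP

variable {S X A : Type} [Fintype S] [Fintype X] [Fintype A] {H : ℕ}

lemma Pobs_nonneg (M : BlockMDP S X A H) (x : X) (a : A) (x' : X) :
    0 ≤ M.Pobs x a x' :=
  Finset.sum_nonneg fun s' _ => mul_nonneg (M.Plat_nonneg _ _ _) (M.emit_nonneg _ _)

lemma Pobs_eq (M : BlockMDP S X A H) (x : X) (a : A) (x' : X) :
    M.Pobs x a x' = M.Plat (M.dec x) a (M.dec x') * M.emit (M.dec x') x' := by
  unfold Pobs
  rw [Finset.sum_eq_single (M.dec x')]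
  · intro s' _ hne
    have : M.emit s' x' = 0 := by
      by_contra h
      exact hne (M.dec_spec s' x' h).symm
    rw [this, mul_zero]
  · intro h; exact absurd (Finset.mem_univ _) h

lemma occAux_nonneg (M : BlockMDP S X A H) (π : X → A) :
    ∀ n x, 0 ≤ M.occAux π n x := by
  intro n
  induction n with
  | zero => intro x; exact M.emit_nonneg _ _
  | succ n ih =>
    intro x'
    exact Finset.sum_nonneg fun x _ => mul_nonneg (ih x) (M.Pobs_nonneg _ _ _)

lemma occAux_layer (M : BlockMDP S X A H) (π : X → A) :
    ∀ n, n + 1 ≤ H → ∀ x, M.occAux π n x ≠ 0 → M.xlayer x = n + 1 := by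
  intro n
  induction n with
  | zero =>
    intro _ x hx
    have : M.dec x = M.s1 := M.dec_spec _ _ hx
    unfold xlayer
    rw [this, M.s1_layer]
  | succ n ih =>
    intro hH x' hx'
    obtain ⟨x, _, hne⟩ := Finset.exists_ne_zero_of_sum_ne_zero hx'
    have h1 : M.occAux π n x ≠ 0 := fun h => hne (by rw [h, zero_mul])
    have h2 : M.Pobs x (π x) x' ≠ 0 := fun h => hne (by rw [h, mul_zero])
    have hlx : M.xlayer x = n + 1 := ih (by omega) x h1
    rw [M.Pobs_eq] at h2
    have hP : M.Plat (M.dec x) (π x) (M.dec x') ≠ 0 := fun h => h2 (by rw [h, zero_mul])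
    have hlt : M.slayer (M.dec x) < H := by
      unfold xlayer at hlx; omega
    have := M.Plat_supp (M.dec x) (π x) (M.dec x') hlt hP
    unfold xlayer at *
    omega

lemma occAux_sum_le (M : BlockMDP S X A H) (π : X → A) :
    ∀ n, n + 1 ≤ H → ∑ x, M.occAux π n x ≤ 1 := by
  intro n
  induction n with
  | zero =>
    intro _
    show (∑ x : X, M.emit M.s1 x) ≤ 1
    exact le_of_eq (M.emit_sum_one M.s1)
  | succ n ih =>
    intro hH
    have hsum : ∑ x', M.occAux π (n + 1) x' = ∑ x, M.occAux π n x * ∑ x', M.Pobs x (π x) x' := by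
      show ∑ x' : X, ∑ x : X, M.occAux π n x * M.Pobs x (π x) x' = _
      rw [Finset.sum_comm]
      simp [Finset.mul_sum]
    rw [hsum]
    calc ∑ x, M.occAux π n x * ∑ x', M.Pobs x (π x) x'
        ≤ ∑ x, M.occAux π n x * 1 := by
          apply Finset.sum_le_sum
          intro x _
          by_cases h0 : M.occAux π n x = 0
          · rw [h0, zero_mul, zero_mul]
          · apply mul_le_mul_of_nonneg_left _ (M.occAux_nonneg π n x)
            have hlx : M.xlayer x = n + 1 := M.occAux_layer π n (by omega) x h0
            have hlt : M.slayer (M.dec x) < H := by unfold xlayer at hlx; omega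
            have : ∑ x', M.Pobs x (π x) x' = 1 := by
              unfold Pobs
              rw [Finset.sum_comm]
              calc ∑ s', ∑ x', M.Plat (M.dec x) (π x) s' * M.emit s' x'
                  = ∑ s', M.Plat (M.dec x) (π x) s' := by
                    apply Finset.sum_congr rfl
                    intro s' _
                    rw [← Finset.mul_sum, M.emit_sum_one, mul_one]
                _ = 1 := M.Plat_sum_one (M.dec x) (π x) hlt
            rw [this]
      _ ≤ 1 := by simpa using ih (by omega)

lemma occAux_le_emit (M : BlockMDP S X A H) (π : X → A) :
    ∀ n, n + 1 ≤ H → ∀ x, M.occAux π n x ≤ M.emit (M.dec x) x := by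
  intro n
  induction n with
  | zero =>
    intro _ x
    by_cases h : M.emit M.s1 x = 0
    · show M.emit M.s1 x ≤ _
      rw [h]; exact M.emit_nonneg _ _
    · show M.emit M.s1 x ≤ _
      rw [M.dec_spec _ _ h]
  | succ n _ =>
    intro hH x'
    show ∑ x : X, M.occAux π n x * M.Pobs x (π x) x' ≤ M.emit (M.dec x') x'
    calc ∑ x, M.occAux π n x * M.Pobs x (π x) x'
        ≤ ∑ x, M.occAux π n x * M.emit (M.dec x') x' := by
          apply Finset.sum_le_sum
          intro x _
          by_cases h0 : M.occAux π n x = 0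
          · rw [h0, zero_mul, zero_mul]
          · apply mul_le_mul_of_nonneg_left _ (M.occAux_nonneg π n x)
            have hlx : M.xlayer x = n + 1 := M.occAux_layer π n (by omega) x h0
            have hlt : M.slayer (M.dec x) < H := by unfold xlayer at hlx; omega
            rw [M.Pobs_eq]
            have hle1 : M.Plat (M.dec x) (π x) (M.dec x') ≤ 1 := by
              rw [← M.Plat_sum_one (M.dec x) (π x) hlt]
              exact Finset.single_le_sum (f := fun s' => M.Plat (M.dec x) (π x) s')
                (fun s' _ => M.Plat_nonneg (M.dec x) (π x) s') (Finset.mem_univ (M.dec x'))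
            calc M.Plat (M.dec x) (π x) (M.dec x') * M.emit (M.dec x') x'
                ≤ 1 * M.emit (M.dec x') x' :=
                  mul_le_mul_of_nonneg_right hle1 (M.emit_nonneg _ _)
              _ = M.emit (M.dec x') x' := one_mul _
      _ = (∑ x, M.occAux π n x) * M.emit (M.dec x') x' := by rw [Finset.sum_mul]
      _ ≤ 1 * M.emit (M.dec x') x' :=
          mul_le_mul_of_nonneg_right (M.occAux_sum_le π n (by omega)) (M.emit_nonneg _ _)
      _ = M.emit (M.dec x') x' := one_mul _

end BlockMDP

open BlockMDP in
/-- Block MDPs have coverability bounded by the number of latent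
states: the uniform mixture `μ_h = (1/|S_h|)·Σ_{s ∈ S_h} ψ(s)` of emissions satisfies
`d^π_h(x) ≤ |S_h|·μ_h(x)` for every policy `π` and observation `x ∈ X_h`; consequently
`C_cov(Π, M) ≤ max_{h ∈ [H]} |S_h|` for every policy class `Π`. -/
theorem block_mdp_coverability
    {S X A : Type} [Fintype S] [Fintype X] [Fintype A]
    {H : ℕ} (M : BlockMDP S X A H) :
    (∀ h, 1 ≤ h → h ≤ H → ∀ (π : X → A) (x : X), M.xlayer x = h →
      M.occ π h x ≤
        ((Finset.univ.filter fun s : S => M.slayer s = h).card : ℝ) *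
          (((Finset.univ.filter fun s : S => M.slayer s = h).card : ℝ)⁻¹ *
            ∑ s ∈ Finset.univ.filter (fun s : S => M.slayer s = h), M.emit s x)) ∧
    ∀ Pi : Finset (X → A),
      M.Ccov Pi ≤
        (((Finset.Icc 1 H).sup fun h =>
          (Finset.univ.filter fun s : S => M.slayer s = h).card : ℕ) : ℝ) := by
  have card_pos : ∀ h, 1 ≤ h → h ≤ H →
      0 < (Finset.univ.filter fun s : S => M.slayer s = h).card := by
    intro h h1 h2
    obtain ⟨s, hs⟩ := M.slayer_surj h h1 h2
    exact Finset.card_pos.2 ⟨s, Finset.mem_filter.2 ⟨Finset.mem_univ _, hs⟩⟩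
  have part1 : ∀ h, 1 ≤ h → h ≤ H → ∀ (π : X → A) (x : X), M.xlayer x = h →
      M.occ π h x ≤
        ((Finset.univ.filter fun s : S => M.slayer s = h).card : ℝ) *
          (((Finset.univ.filter fun s : S => M.slayer s = h).card : ℝ)⁻¹ *
            ∑ s ∈ Finset.univ.filter (fun s : S => M.slayer s = h), M.emit s x) := by
    intro h h1 h2 π x hx
    have hcard : ((Finset.univ.filter fun s : S => M.slayer s = h).card : ℝ) ≠ 0 := by
      exact_mod_cast (card_pos h h1 h2).ne'
    rw [mul_inv_cancel_left₀ hcard]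
    have hocc : M.occ π h x ≤ M.emit (M.dec x) x := by
      have : M.occ π h x = M.occAux π (h - 1) x := rfl
      rw [this]
      exact M.occAux_le_emit π (h - 1) (by omega) x
    refine hocc.trans ?_
    apply Finset.single_le_sum (fun s _ => M.emit_nonneg s x)
    exact Finset.mem_filter.2 ⟨Finset.mem_univ _, hx⟩
  refine ⟨part1, fun Pi => ?_⟩
  set B : ℝ := (((Finset.Icc 1 H).sup fun h =>
      (Finset.univ.filter fun s : S => M.slayer s = h).card : ℕ) : ℝ) with hB
  have hB0 : 0 ≤ B := Nat.cast_nonneg _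
  apply ciSup_le
  intro h
  by_cases hmem : h ∈ Finset.Icc 1 H
  · haveI : Nonempty (h ∈ Finset.Icc 1 H) := ⟨hmem⟩
    apply ciSup_le
    intro _
    have h1 : 1 ≤ h := (Finset.mem_Icc.1 hmem).1
    have h2 : h ≤ H := (Finset.mem_Icc.1 hmem).2
    have hcardB : ((Finset.univ.filter fun s : S => M.slayer s = h).card : ℝ) ≤ B := by
      rw [hB]
      exact_mod_cast Finset.le_sup (f := fun h =>
        (Finset.univ.filter fun s : S => M.slayer s = h).card) hmem
    refine le_trans ?_ hcardB
    set c : ℝ := ((Finset.univ.filter fun s : S => M.slayer s = h).card : ℝ)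
    have hcard : c ≠ 0 := Nat.cast_ne_zero.mpr (card_pos h h1 h2).ne'
    have hmemS : c ∈ {c : ℝ | ∃ μh : X → ℝ, (∀ x, 0 ≤ μh x) ∧ (∑ x, μh x = 1) ∧
        (∀ x, μh x ≠ 0 → M.xlayer x = h) ∧
        ∀ π ∈ Pi, ∀ x, M.xlayer x = h → M.occ π h x ≤ c * μh x} := by
      refine ⟨fun x => c⁻¹ * ∑ s ∈ Finset.univ.filter (fun s : S => M.slayer s = h),
        M.emit s x, ?_, ?_, ?_, ?_⟩
      · intro x
        exact mul_nonneg (inv_nonneg.2 (Nat.cast_nonneg _))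
          (Finset.sum_nonneg fun s _ => M.emit_nonneg s x)
      · rw [← Finset.mul_sum, Finset.sum_comm]
        have : ∀ s ∈ Finset.univ.filter (fun s : S => M.slayer s = h),
            ∑ x, M.emit s x = 1 := fun s _ => M.emit_sum_one s
        rw [Finset.sum_congr rfl this, Finset.sum_const, nsmul_eq_mul, mul_one,
          inv_mul_cancel₀ hcard]
      · intro x hx
        have hsum : (∑ s ∈ Finset.univ.filter (fun s : S => M.slayer s = h),
            M.emit s x) ≠ 0 := by
          intro h0
          apply hx
          show c⁻¹ * _ = 0
          rw [h0, mul_zero]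
        obtain ⟨s, hs, hne⟩ := Finset.exists_ne_zero_of_sum_ne_zero hsum
        have := M.dec_spec s x hne
        unfold BlockMDP.xlayer
        rw [this]
        exact (Finset.mem_filter.1 hs).2
      · intro π _ x hx
        exact part1 h h1 h2 π x hx
    by_cases hbdd : BddBelow {c : ℝ | ∃ μh : X → ℝ, (∀ x, 0 ≤ μh x) ∧ (∑ x, μh x = 1) ∧
        (∀ x, μh x ≠ 0 → M.xlayer x = h) ∧
        ∀ π ∈ Pi, ∀ x, M.xlayer x = h → M.occ π h x ≤ c * μh x}
    · exact csInf_le hbdd hmemS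
    · have h0 : M.covAt Pi h = 0 := Real.sInf_of_not_bddBelow hbdd
      rw [h0]
      exact Nat.cast_nonneg _
  · haveI : IsEmpty (h ∈ Finset.Icc 1 H) := ⟨fun hh => hmem hh⟩
    rw [Real.iSup_of_isEmpty (fun _ : h ∈ Finset.Icc 1 H => M.covAt Pi h)]
    exact hB0
end

section
/- Properties of the rich-observation combination lock (verification of conditions (A) and (B) in the lower bound for generative access): Fix an integer H ≥ 2 and a secret string π⋆ = (π⋆_1, …, π⋆_H) ∈ {0,1}^H, and let M be any combination-lock Block MDP with secret π⋆: two latent states S_h = {g_h, b_h} per layer with initial latent state g_1; actions A = {0,1}; latent transitions P_lat(·|s,a) = δ_{g_{h+1}} if (s,a) = (g_h, π⋆_h) and P_lat(·|s,a) = δ_{b_{h+1}} otherwise; latent rewards R_lat(s,a) = 1 if (s,a) = (g_H, π⋆_H) and 0 otherwise; and an arbitrary emission ψ with pairwise disjoint supports within each layer. Let Π_open be the class of the 2^H open-loop policies over A = {0,1}. Then: (A) the coverability coefficient satisfies C_cov(Π_open, M) = 2; and (B) Π_open is policy complete for M. -/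
open Finset

open BlockMDP in
/-- Properties of the rich-observation combination lock (verification
of conditions (A) and (B) in the lower bound for generative access): any Block MDP
whose latent structure is the combination lock with secret `π⋆ ∈ {0,1}^H` — two latent
states `g h, b h` per layer, actions `Bool`, transitions following the lock, and reward
`1` exactly at `(g H, π⋆_H)` — has coverability coefficient exactly `2` with respect to
the class `Π_open` of open-loop policies, and `Π_open` is policy complete for it. -/
theorem combination_lock_properties
    {S X : Type} [Fintype S] [Fintype X] [DecidableEq S]
    (H : ℕ) (hH : 2 ≤ H) (πstar : ℕ → Bool)
    (M : BlockMDP S X Bool H)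
    (g b : ℕ → S)
    (hg : ∀ h, 1 ≤ h → h ≤ H → M.slayer (g h) = h)
    (hb : ∀ h, 1 ≤ h → h ≤ H → M.slayer (b h) = h)
    (hgb : ∀ h, 1 ≤ h → h ≤ H → g h ≠ b h)
    (hcover : ∀ s : S, s = g (M.slayer s) ∨ s = b (M.slayer s))
    (hs1 : M.s1 = g 1)
    (htrans_g_star : ∀ h, 1 ≤ h → h < H → ∀ s' : S,
      M.Plat (g h) (πstar h) s' = if s' = g (h + 1) then 1 else 0)
    (htrans_g_dev : ∀ h, 1 ≤ h → h < H → ∀ a : Bool, a ≠ πstar h → ∀ s' : S,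
      M.Plat (g h) a s' = if s' = b (h + 1) then 1 else 0)
    (htrans_b : ∀ h, 1 ≤ h → h < H → ∀ (a : Bool) (s' : S),
      M.Plat (b h) a s' = if s' = b (h + 1) then 1 else 0)
    (hrew : ∀ (s : S) (a : Bool),
      M.Rlat s a = if s = g H ∧ a = πstar H then 1 else 0)
    (PiOpen : Finset (X → Bool))
    (hPiOpen : ∀ π : X → Bool,
      π ∈ PiOpen ↔ ∃ f : ℕ → Bool, ∀ x, π x = f (M.xlayer x)) :
    -- (A) the coverability coefficient equals 2
    M.Ccov PiOpen = 2 ∧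
    -- (B) Π_open is policy complete for M
    (∀ π ∈ PiOpen, ∀ h, 1 ≤ h → h ≤ H → ∃ πt ∈ PiOpen,
      ∀ x : X, M.xlayer x = h → ∀ a : Bool, M.Q π x a ≤ M.Q π x (πt x)) := by

  classical
  -- One-step evolution of the occupancy when the current occupancy is an emission
  -- distribution and the latent transition is deterministic.
  have step : ∀ (π : X → Bool) (n : ℕ) (s t : S) (a : Bool),
      BlockMDP.occAux M π n = M.emit s →
      (∀ x, M.dec x = s → π x = a) →
      (∀ s', M.Plat s a s' = if s' = t then 1 else 0) →
      BlockMDP.occAux M π (n + 1) = M.emit t := by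
    intro π n s t a hocc ha ht
    funext x'
    have hterm : ∀ x : X, M.emit s x * M.Pobs x (π x) x' = M.emit s x * M.emit t x' := by
      intro x
      by_cases hx : M.emit s x = 0
      · simp [hx]
      · have hdec : M.dec x = s := M.dec_spec s x hx
        have hpi : π x = a := ha x hdec
        congr 1
        rw [BlockMDP.Pobs, hdec, hpi]
        rw [Finset.sum_congr rfl (fun s' _ => by rw [ht s'])]
        simp
    simp only [BlockMDP.occAux]
    rw [hocc]
    calc (∑ x, M.emit s x * M.Pobs x (π x) x') = ∑ x, M.emit s x * M.emit t x' :=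
          Finset.sum_congr rfl fun x _ => hterm x
      _ = (∑ x, M.emit s x) * M.emit t x' := by rw [Finset.sum_mul]
      _ = M.emit t x' := by rw [M.emit_sum_one, one_mul]
  have hxlayer_emit : ∀ (s : S) (x : X), M.emit s x ≠ 0 → M.xlayer x = M.slayer s := by
    intro s x hx; rw [BlockMDP.xlayer, M.dec_spec s x hx]
  have hzero : ∀ π : X → Bool, BlockMDP.occAux M π 0 = M.emit (g 1) := by
    intro π; funext x; simp [BlockMDP.occAux, hs1]
  set πg : X → Bool := fun x => πstar (M.xlayer x) with hπg
  set πb : X → Bool := fun x => !πstar (M.xlayer x) with hπb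
  have hπg_mem : πg ∈ PiOpen := (hPiOpen _).mpr ⟨πstar, fun x => rfl⟩
  have hπb_mem : πb ∈ PiOpen := (hPiOpen _).mpr ⟨fun k => !πstar k, fun x => rfl⟩
  have occ_good : ∀ n, n + 1 ≤ H → BlockMDP.occAux M πg n = M.emit (g (n + 1)) := by
    intro n
    induction n with
    | zero => intro _; exact hzero πg
    | succ n ih =>
      intro hn
      refine step πg n (g (n + 1)) (g (n + 1 + 1)) (πstar (n + 1)) (ih (by omega)) ?_
        (htrans_g_star (n + 1) (by omega) (by omega))
      intro x hdec
      show πstar (M.xlayer x) = πstar (n + 1)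
      rw [BlockMDP.xlayer, hdec, hg (n + 1) (by omega) (by omega)]
  have occ_open : ∀ (f : ℕ → Bool) (n : ℕ), n + 1 ≤ H →
      BlockMDP.occAux M (fun x => f (M.xlayer x)) n = M.emit (g (n + 1)) ∨
      BlockMDP.occAux M (fun x => f (M.xlayer x)) n = M.emit (b (n + 1)) := by
    intro f n
    induction n with
    | zero => intro _; exact Or.inl (hzero _)
    | succ n ih =>
      intro hn
      have hlayg : ∀ x, M.dec x = g (n + 1) → f (M.xlayer x) = f (n + 1) := by
        intro x hdec; rw [BlockMDP.xlayer, hdec, hg (n + 1) (by omega) (by omega)]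
      have hlayb : ∀ x, M.dec x = b (n + 1) → f (M.xlayer x) = f (n + 1) := by
        intro x hdec; rw [BlockMDP.xlayer, hdec, hb (n + 1) (by omega) (by omega)]
      rcases ih (by omega) with h | h
      · by_cases hfa : f (n + 1) = πstar (n + 1)
        · left
          refine step _ n (g (n + 1)) _ (f (n + 1)) h hlayg ?_
          rw [hfa]; exact htrans_g_star (n + 1) (by omega) (by omega)
        · right
          exact step _ n (g (n + 1)) _ (f (n + 1)) h hlayg
            (htrans_g_dev (n + 1) (by omega) (by omega) _ hfa)
      · right
        exact step _ n (b (n + 1)) _ (f (n + 1)) h hlayb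
          (htrans_b (n + 1) (by omega) (by omega) _)
  have occ_bad : BlockMDP.occAux M πb 1 = M.emit (b 2) := by
    refine step πb 0 (g 1) (b 2) (!πstar 1) (hzero πb) ?_
      (htrans_g_dev 1 le_rfl (by omega) _ (Bool.not_ne_self (πstar 1)))
    intro x hdec
    show (!πstar (M.xlayer x)) = !πstar 1
    rw [BlockMDP.xlayer, hdec, hg 1 le_rfl (by omega)]
  -- the witness distribution showing covAt ≤ 2
  have hmem2 : ∀ h, 1 ≤ h → h ≤ H → ∃ μh : X → ℝ, (∀ x, 0 ≤ μh x) ∧ (∑ x, μh x = 1) ∧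
      (∀ x, μh x ≠ 0 → M.xlayer x = h) ∧
      (∀ π ∈ PiOpen, ∀ x, M.xlayer x = h → M.occ π h x ≤ 2 * μh x) := by
    intro h h1 hHh
    refine ⟨fun x => (M.emit (g h) x + M.emit (b h) x) / 2, ?_, ?_, ?_, ?_⟩
    · intro x
      have := M.emit_nonneg (g h) x; have := M.emit_nonneg (b h) x; positivity
    · rw [← Finset.sum_div, Finset.sum_add_distrib, M.emit_sum_one, M.emit_sum_one]
      norm_num
    · intro x hx
      by_cases h1x : M.emit (g h) x = 0
      · by_cases h2x : M.emit (b h) x = 0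
        · exfalso
          apply hx
          show (M.emit (g h) x + M.emit (b h) x) / 2 = 0
          rw [h1x, h2x]; norm_num
        · rw [hxlayer_emit _ _ h2x, hb h h1 hHh]
      · rw [hxlayer_emit _ _ h1x, hg h h1 hHh]
    · intro π hπ x hx
      obtain ⟨f, hf⟩ := (hPiOpen π).mp hπ
      have hπeq : π = fun x => f (M.xlayer x) := funext hf
      have hh1 : (h - 1) + 1 = h := by omega
      have hocc : ∀ u : X → ℝ, BlockMDP.occAux M π (h - 1) = u → M.occ π h x = u x := by
        intro u hu; rw [BlockMDP.occ, hu]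
      have hdisj := occ_open f (h - 1) (by omega)
      rw [hh1, ← hπeq] at hdisj
      have hgx := M.emit_nonneg (g h) x
      have hbx := M.emit_nonneg (b h) x
      rcases hdisj with h' | h'
      · rw [hocc _ h']; ring_nf; linarith
      · rw [hocc _ h']; ring_nf; linarith
  -- every covering constant is nonnegative
  have hbdd : ∀ h, 1 ≤ h → h ≤ H → ∀ c : ℝ, (∃ μh : X → ℝ, (∀ x, 0 ≤ μh x) ∧
      (∑ x, μh x = 1) ∧ (∀ x, μh x ≠ 0 → M.xlayer x = h) ∧
      (∀ π ∈ PiOpen, ∀ x, M.xlayer x = h → M.occ π h x ≤ c * μh x)) → 0 ≤ c := by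
    rintro h h1 hHh c ⟨μ, hμ0, hμ1, hμs, hμb⟩
    obtain ⟨x0, hx0⟩ : ∃ x, M.emit (g h) x ≠ 0 := by
      by_contra hall
      push_neg at hall
      have h0 : (∑ x : X, M.emit (g h) x) = 0 := Finset.sum_eq_zero fun x _ => hall x
      rw [M.emit_sum_one] at h0; norm_num at h0
    have hlx : M.xlayer x0 = h := by rw [hxlayer_emit _ _ hx0, hg h h1 hHh]
    have hog : M.occ πg h x0 = M.emit (g h) x0 := by
      have hgd := occ_good (h - 1) (by omega)
      rw [show (h - 1) + 1 = h by omega] at hgd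
      rw [BlockMDP.occ, hgd]
    have hle := hμb πg hπg_mem x0 hlx
    rw [hog] at hle
    have hpos : 0 < M.emit (g h) x0 := lt_of_le_of_ne (M.emit_nonneg _ _) (Ne.symm hx0)
    by_contra hc
    push_neg at hc
    nlinarith [hμ0 x0]
  have hcov_le : ∀ h, 1 ≤ h → h ≤ H → M.covAt PiOpen h ≤ 2 := by
    intro h h1 hHh
    exact csInf_le ⟨0, fun c hc => hbdd h h1 hHh c hc⟩ (hmem2 h h1 hHh)
  -- lower bound at layer 2
  have hdisj2 : ∀ x, M.emit (g 2) x = 0 ∨ M.emit (b 2) x = 0 := by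
    intro x
    by_contra hcon
    push_neg at hcon
    have h1 := M.dec_spec (g 2) x hcon.1
    have h2 := M.dec_spec (b 2) x hcon.2
    exact hgb 2 one_le_two hH (h1 ▸ h2)
  have hcov_ge : (2 : ℝ) ≤ M.covAt PiOpen 2 := by
    refine le_csInf ⟨2, hmem2 2 one_le_two hH⟩ ?_
    rintro c ⟨μ, hμ0, hμ1, hμs, hμb⟩
    have hog : M.occ πg 2 = M.emit (g 2) := by
      have hgd := occ_good 1 hH
      rw [BlockMDP.occ]; exact hgd
    have hob : M.occ πb 2 = M.emit (b 2) := by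
      rw [BlockMDP.occ]; exact occ_bad
    have key : ∀ x : X, M.emit (g 2) x + M.emit (b 2) x ≤ c * μ x := by
      intro x
      by_cases hx : M.xlayer x = 2
      · have e1 := hμb πg hπg_mem x hx
        have e2 := hμb πb hπb_mem x hx
        rw [hog] at e1; rw [hob] at e2
        rcases hdisj2 x with h0 | h0
        · rw [h0]; linarith [M.emit_nonneg (b 2) x]
        · rw [h0]; linarith [M.emit_nonneg (g 2) x]
      · have hg0 : M.emit (g 2) x = 0 := by
          by_contra h0; exact hx (by rw [hxlayer_emit _ _ h0, hg 2 one_le_two hH])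
        have hb0 : M.emit (b 2) x = 0 := by
          by_contra h0; exact hx (by rw [hxlayer_emit _ _ h0, hb 2 one_le_two hH])
        have hμx : μ x = 0 := by
          by_contra h0; exact hx (hμs x h0)
        rw [hg0, hb0, hμx]; norm_num
    have hsum := Finset.sum_le_sum (fun x (_ : x ∈ Finset.univ) => key x)
    rw [Finset.sum_add_distrib, M.emit_sum_one, M.emit_sum_one, ← Finset.mul_sum, hμ1,
      mul_one] at hsum
    linarith
  have hFle : ∀ h : ℕ, (⨆ _ : h ∈ Finset.Icc 1 H, M.covAt PiOpen h) ≤ 2 := by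
    intro h
    refine Real.iSup_le ?_ (by norm_num)
    intro hh
    have hm := Finset.mem_Icc.mp hh
    exact hcov_le h hm.1 hm.2
  have hA : M.Ccov PiOpen = 2 := by
    rw [BlockMDP.Ccov]
    refine le_antisymm (Real.iSup_le hFle (by norm_num)) ?_
    have h2 : 2 ∈ Finset.Icc 1 H := Finset.mem_Icc.mpr ⟨one_le_two, hH⟩
    have hb2 : BddAbove (Set.range fun h => ⨆ _ : h ∈ Finset.Icc 1 H, M.covAt PiOpen h) :=
      ⟨2, by rintro y ⟨h, rfl⟩; exact hFle h⟩
    calc (2 : ℝ) ≤ M.covAt PiOpen 2 := hcov_ge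
      _ = ⨆ _ : 2 ∈ Finset.Icc 1 H, M.covAt PiOpen 2 := (ciSup_pos (f := fun _ : 2 ∈ Finset.Icc 1 H => M.covAt PiOpen 2) h2).symm
      _ ≤ _ := le_ciSup hb2 2
  refine ⟨hA, ?_⟩
  -- (B) policy completeness
  intro π hπ h h1 hHh
  obtain ⟨f, hf⟩ := (hPiOpen π).mp hπ
  set F : S → Bool → ℝ := fun s a =>
    M.Rlat s a + ∑ x', (∑ s', M.Plat s a s' * M.emit s' x') * BlockMDP.Vsteps M π (H - h) x'
    with hF
  have hQ : ∀ x : X, M.xlayer x = h → ∀ a, M.Q π x a = F (M.dec x) a := by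
    intro x hx a
    simp only [BlockMDP.Q, BlockMDP.Robs, BlockMDP.Pobs, hx, hF]
  set astar : Bool := if F (g h) false ≤ F (g h) true then true else false with hasdef
  have hstar : ∀ a : Bool, F (g h) a ≤ F (g h) astar := by
    intro a
    by_cases hle : F (g h) false ≤ F (g h) true
    · have hs : astar = true := if_pos hle
      rw [hs]; cases a
      · exact hle
      · exact le_rfl
    · have hs : astar = false := if_neg hle
      rw [hs]; cases a
      · exact le_rfl
      · exact (not_le.mp hle).le
  have hbh_ne : b h ≠ g H := by
    intro he
    have hsl : M.slayer (b h) = h := hb h h1 hHh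
    rw [he, hg H (by omega) le_rfl] at hsl
    subst hsl
    exact hgb H h1 hHh he.symm
  have hr0 : ∀ a' : Bool, M.Rlat (b h) a' = 0 := by
    intro a'; rw [hrew]; simp [hbh_ne]
  have hFb : ∀ a : Bool, F (b h) a = F (b h) true := by
    intro a
    by_cases hhH : h = H
    · subst hhH
      simp only [hF, hr0, Nat.sub_self, BlockMDP.Vsteps, mul_zero, Finset.sum_const_zero]
    · have hlt : h < H := lt_of_le_of_ne hHh hhH
      have hP : ∀ (a' : Bool) (x' : X),
          (∑ s', M.Plat (b h) a' s' * M.emit s' x') = M.emit (b (h + 1)) x' := by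
        intro a' x'
        rw [Finset.sum_congr rfl (fun s' _ => by rw [htrans_b h h1 hlt a' s'])]
        simp
      simp only [hF, hr0]
      congr 1
      exact Finset.sum_congr rfl fun x' _ => by rw [hP a, hP true]
  refine ⟨fun x => if M.xlayer x = h then astar else f (M.xlayer x),
    (hPiOpen _).mpr ⟨fun k => if k = h then astar else f k, fun x => rfl⟩, ?_⟩
  intro x hx a
  show M.Q π x a ≤ M.Q π x (if M.xlayer x = h then astar else f (M.xlayer x))
  rw [if_pos hx, hQ x hx a, hQ x hx astar]
  rcases hcover (M.dec x) with hd | hd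
  · have hdg : M.dec x = g h := by
      rw [hd]; exact congrArg g hx
    rw [hdg]; exact hstar a
  · have hdb : M.dec x = b h := by
      rw [hd]; exact congrArg b hx
    rw [hdb, hFb a, hFb astar]
end
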